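/- arXiv:1502.03428 — 2 statements merged into one kernel-verified Lean document; each statement's English description precedes it below -/
import Mathlib

section
/- Let T : ℝ^{2n} → ℝ^{2n} be a linear map with no real eigenvalues, and let J_T be the linear complex structure obtained by acting as multiplication by i on the sum of generalized eigenspaces of the complexification of T for eigenvalues with positive imaginary part, and by -i on those with negative imaginary part. Then for every t ∈ [0,1], the map (1-t)T + tJ_T has no real eigenvalues. -/
/-!
On a generalized eigenspace `V_μ` of the complexification `Tc` of `T`, the complexified
`J` is the scalar `ε = ±i` with `ε` of the same sign of imaginary part as `μ`, so
`S = (1-t)Tc + tJc` agrees there with `(1-t)Tc + tε`, and `V_μ` lies in the generalized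
eigenspace of `S` for `(1-t)μ + tε`, whose imaginary part is a convex combination of
`Im μ` and `Im ε` and hence nonzero. As `T` has no real eigenvalues, the `V_μ` with `Im μ ≠ 0`
span everything, so the generalized eigenspaces of `S` for non-real eigenvalues do too, and by
independence of generalized eigenspaces `S`, hence `(1-t)T + tJ`, has no real eigenvalue.
-/

open Module.End

namespace Module.End

variable {R M : Type*} [CommRing R] [AddCommGroup M] [Module R M]

theorem maxGenEigenspace_le_maxGenEigenspace_of_eqOn {f g : End R M} {μ : R} (a b : R)
    (h : ∀ x ∈ f.maxGenEigenspace μ, g x = a • f x + b • x) :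
    f.maxGenEigenspace μ ≤ g.maxGenEigenspace (a * μ + b) := by
  have hmaps := f.mapsTo_maxGenEigenspace_of_comm
    ((Commute.refl f).sub_right ((Commute.one_right f).smul_right μ)) μ
  have hstep : ∀ x ∈ f.maxGenEigenspace μ,
      (g - (a * μ + b) • 1) x = a • (f - μ • 1) x := by
    intro x hx
    simp only [LinearMap.sub_apply, LinearMap.smul_apply, one_apply, h x hx]
    module
  have hpow : ∀ k : ℕ, ∀ x ∈ f.maxGenEigenspace μ,
      ((g - (a * μ + b) • 1) ^ k) x = a ^ k • ((f - μ • 1) ^ k) x := by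
    intro k
    induction k with
    | zero => simp
    | succ k ih =>
      intro x hx
      rw [pow_succ, mul_apply, hstep x hx, map_smul, ih _ (hmaps hx), smul_smul, ← pow_succ',
        ← mul_apply, ← pow_succ]
  intro x hx
  obtain ⟨k, hk⟩ := (mem_maxGenEigenspace f μ x).1 hx
  exact (mem_maxGenEigenspace g _ x).2 ⟨k, by rw [hpow k x hx, hk, smul_zero]⟩

theorem maxGenEigenspace_le_maxGenEigenspace_smul_add_smul {f j : End R M} {s : Set R} {ε : R}
    (hj : ∀ x ∈ ⨆ μ ∈ s, f.maxGenEigenspace μ, j x = ε • x) (a b : R) {μ : R}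
    (hμ : μ ∈ s) :
    f.maxGenEigenspace μ ≤ (a • f + b • j).maxGenEigenspace (a * μ + b * ε) := by
  refine maxGenEigenspace_le_maxGenEigenspace_of_eqOn a (b * ε) fun x hx => ?_
  rw [LinearMap.add_apply, LinearMap.smul_apply, LinearMap.smul_apply,
    hj x ((le_iSup₂ (f := fun μ _ => f.maxGenEigenspace μ) μ hμ) hx), smul_smul]

theorem maxGenEigenspace_eq_bot_of_biSup_eq_top [IsDomain R] [IsTorsionFree R M] {f : End R M}
    {s : Set R} (hs : ⨆ ν ∈ s, f.maxGenEigenspace ν = ⊤) {μ : R} (hμ : μ ∉ s) :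
    f.maxGenEigenspace μ = ⊥ := by
  simpa [hs] using f.independent_maxGenEigenspace.disjoint_biSup hμ

end Module.End

section Complexification

variable {ι : Type*}

def IsComplexification (T : (ι → ℝ) →ₗ[ℝ] (ι → ℝ)) (Tc : (ι → ℂ) →ₗ[ℂ] (ι → ℂ)) :
    Prop :=
  ∀ v : ι → ℝ, Tc (fun i => (v i : ℂ)) = fun i => (T v i : ℂ)

namespace IsComplexification

variable {T J : (ι → ℝ) →ₗ[ℝ] (ι → ℝ)} {Tc Jc : (ι → ℂ) →ₗ[ℂ] (ι → ℂ)}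

theorem add (hT : IsComplexification T Tc) (hJ : IsComplexification J Jc) :
    IsComplexification (T + J) (Tc + Jc) := by
  intro v
  ext i
  simp [hT v, hJ v]

theorem smul (hT : IsComplexification T Tc) (r : ℝ) :
    IsComplexification (r • T) ((r : ℂ) • Tc) := by
  intro v
  ext i
  simp [hT v]

theorem apply_eq (hT : IsComplexification T Tc) (w : ι → ℂ) :
    Tc w = fun i => ⟨T (fun j => (w j).re) i, T (fun j => (w j).im) i⟩ := by
  have hw : w = (fun i => ((w i).re : ℂ)) + Complex.I • fun i => ((w i).im : ℂ) := by
    funext i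
    apply Complex.ext <;> simp
  rw [hw, map_add, map_smul, hT, hT]
  funext i
  apply Complex.ext <;> simp

theorem eq_zero_of_apply_eq_smul (hT : IsComplexification T Tc) {r : ℝ}
    (hr : maxGenEigenspace Tc (r : ℂ) = ⊥) {v : ι → ℝ} (hv : T v = r • v) : v = 0 := by
  have hmem : (fun i => (v i : ℂ)) ∈ eigenspace Tc (r : ℂ) := by
    rw [mem_eigenspace_iff, hT v, hv]
    funext i
    simp
  have := eigenspace_le_maxGenEigenspace hmem
  rw [hr, Submodule.mem_bot] at this
  ext i
  simpa using congrFun this i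

theorem maxGenEigenspace_eq_bot (hT : IsComplexification T Tc)
    (hreal : ∀ (c : ℝ) (v : ι → ℝ), v ≠ 0 → T v ≠ c • v) {μ : ℂ} (hμ : μ.im = 0) :
    maxGenEigenspace Tc μ = ⊥ := by
  by_contra h
  have hμ' : HasEigenvalue Tc μ := HasUnifEigenvalue.lt zero_lt_one h
  obtain ⟨w, hw, hw0⟩ := hμ'.exists_hasEigenvector
  have hTw := mem_eigenspace_iff.1 hw
  rw [hT.apply_eq] at hTw
  have hre : T (fun j => (w j).re) = μ.re • fun j => (w j).re := by
    ext i; simpa [hμ] using congrArg Complex.re (congrFun hTw i)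
  have him : T (fun j => (w j).im) = μ.re • fun j => (w j).im := by
    ext i; simpa [hμ] using congrArg Complex.im (congrFun hTw i)
  have hre0 : (fun j => (w j).re) = 0 := by_contra fun h => hreal μ.re _ h hre
  have him0 : (fun j => (w j).im) = 0 := by_contra fun h => hreal μ.re _ h him
  exact hw0 (funext fun i => Complex.ext (congrFun hre0 i) (congrFun him0 i))

end IsComplexification

end Complexification

/-- If `T : ℝ^{2n} → ℝ^{2n}` has no real eigenvalues and `J` is the linear complex
structure whose complexification acts as `i` on the sum of generalized eigenspaces of
the complexified `T` for eigenvalues of positive imaginary part and as `-i` on those of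
negative imaginary part, then `(1-t)T + tJ` has no real eigenvalues for `t ∈ [0,1]`. -/
theorem stmt4 (n : ℕ)
    (T J : (Fin (2 * n) → ℝ) →ₗ[ℝ] (Fin (2 * n) → ℝ))
    (Tc Jc : (Fin (2 * n) → ℂ) →ₗ[ℂ] (Fin (2 * n) → ℂ))
    (hT : ∀ (c : ℝ) (v : Fin (2 * n) → ℝ), v ≠ 0 → T v ≠ c • v)
    (hTc : ∀ v : Fin (2 * n) → ℝ,
      Tc (fun i => (v i : ℂ)) = fun i => ((T v) i : ℂ))
    (hJc : ∀ v : Fin (2 * n) → ℝ,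
      Jc (fun i => (v i : ℂ)) = fun i => ((J v) i : ℂ))
    (hplus : ∀ x ∈ (⨆ μ ∈ {μ : ℂ | 0 < μ.im}, Module.End.maxGenEigenspace Tc μ),
      Jc x = Complex.I • x)
    (hminus : ∀ x ∈ (⨆ μ ∈ {μ : ℂ | μ.im < 0}, Module.End.maxGenEigenspace Tc μ),
      Jc x = (-Complex.I) • x) :
    ∀ t ∈ Set.Icc (0 : ℝ) 1, ∀ (c : ℝ) (v : Fin (2 * n) → ℝ), v ≠ 0 →
      ((1 - t) • T + t • J) v ≠ c • v := by
  rintro t ⟨ht0, ht1⟩ c v hv hEq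
  have h1t : 0 ≤ 1 - t := sub_nonneg.2 ht1
  set S := ((1 - t : ℝ) : ℂ) • Tc + (t : ℂ) • Jc
  have hS : IsComplexification ((1 - t) • T + t • J) S :=
    (IsComplexification.smul hTc _).add (IsComplexification.smul hJc _)
  have hS_top : ⨆ ν ∈ {ν : ℂ | ν.im ≠ 0}, maxGenEigenspace S ν = ⊤ := by
    refine eq_top_iff.2 ((iSup_maxGenEigenspace_eq_top Tc).ge.trans (iSup_le fun μ => ?_))
    rcases lt_trichotomy μ.im 0 with hμ | hμ | hμ
    · refine (maxGenEigenspace_le_maxGenEigenspace_smul_add_smul hminus _ _ hμ).trans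
        (le_iSup₂_of_le _ (ne_of_lt ?_) le_rfl)
      simpa using convex_Iio (0 : ℝ) hμ (neg_one_lt_zero (R := ℝ)) h1t ht0
        (sub_add_cancel 1 t)
    · rw [IsComplexification.maxGenEigenspace_eq_bot hTc hT hμ]
      exact bot_le
    · refine (maxGenEigenspace_le_maxGenEigenspace_smul_add_smul hplus _ _ hμ).trans
        (le_iSup₂_of_le _ (ne_of_gt ?_) le_rfl)
      simpa using convex_Ioi (0 : ℝ) hμ (one_pos (α := ℝ)) h1t ht0
        (sub_add_cancel 1 t)
  have hS_real : maxGenEigenspace S (c : ℂ) = ⊥ :=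
    maxGenEigenspace_eq_bot_of_biSup_eq_top hS_top (by simp)
  exact hv (hS.eq_zero_of_apply_eq_smul hS_real hEq)
end

section
/- A 2n-dimensional linear subspace of Hom(P, P^⊥) ≅ P^⊥ ⊕ P^⊥ meets the bad cone (the set of homomorphisms P → P^⊥ with nontrivial kernel, i.e. pairs (A₁, A₂) of the form (cos t · A₁, sin t · A₁)) only at the origin if and only if it is the graph of a linear map L : P^⊥ → P^⊥ with no real eigenvalues. -/
/-- A `2n`-dimensional subspace of `Hom(P, P^⊥) ≅ P^⊥ × P^⊥` meets the bad cone
(pairs of the form `(cos t • a, sin t • a)`) only at the origin if and only if it is the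
graph of a linear map `L : P^⊥ → P^⊥` with no real eigenvalues. -/
theorem stmt8 (n : ℕ)
    (T : Submodule ℝ ((Fin (2 * n) → ℝ) × (Fin (2 * n) → ℝ)))
    (hdim : Module.finrank ℝ T = 2 * n) :
    (∀ p ∈ T, (∃ (a : Fin (2 * n) → ℝ) (t : ℝ),
        p = (Real.cos t • a, Real.sin t • a)) → p = 0) ↔
      ∃ L : (Fin (2 * n) → ℝ) →ₗ[ℝ] (Fin (2 * n) → ℝ),
        (∀ (c : ℝ) (v : Fin (2 * n) → ℝ), v ≠ 0 → L v ≠ c • v) ∧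
        T = LinearMap.graph L := by
  set V := (Fin (2 * n) → ℝ)
  constructor
  · intro h
    have hfin : Module.finrank ℝ V = 2 * n := Module.finrank_fin_fun ℝ
    set f : T →ₗ[ℝ] V := (LinearMap.fst ℝ V V).comp T.subtype with hf
    have hinj : Function.Injective f := by
      rw [← LinearMap.ker_eq_bot, Submodule.eq_bot_iff]
      intro x hx
      have hx1 : ((x : V × V)).1 = 0 := LinearMap.mem_ker.mp hx
      have := h x x.2 ⟨(x : V × V).2, Real.pi / 2, by
        simp [Prod.ext_iff, hx1]⟩
      exact Subtype.ext this
    let e : T ≃ₗ[ℝ] V := LinearMap.linearEquivOfInjective f hinj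
      (hdim.trans hfin.symm)
    have he : ∀ x : T, e x = (x : V × V).1 := fun x => rfl
    have hsymm : ∀ v : V, ((e.symm v : T) : V × V).1 = v := by
      intro v
      rw [← he (e.symm v), e.apply_symm_apply]
    refine ⟨(LinearMap.snd ℝ V V).comp (T.subtype.comp e.symm.toLinearMap), ?_, ?_⟩
    · intro c v hv hLv
      simp only [LinearMap.comp_apply] at hLv
      have hmem : ((v, c • v) : V × V) ∈ T := by
        have hEq : ((e.symm v : T) : V × V) = (v, c • v) :=
          Prod.ext (hsymm v) hLv
        rw [← hEq]; exact (e.symm v).2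
      have hs : Real.sqrt (1 + c ^ 2) ≠ 0 := by positivity
      have := h _ hmem ⟨Real.sqrt (1 + c ^ 2) • v, Real.arctan c, by
        rw [Real.cos_arctan, Real.sin_arctan, smul_smul, smul_smul,
          div_mul_cancel₀ _ hs, div_mul_cancel₀ _ hs, one_smul]⟩
      exact hv (congrArg Prod.fst this)
    · ext p
      rw [LinearMap.mem_graph_iff]
      constructor
      · intro hp
        have hEq : e.symm p.1 = ⟨p, hp⟩ := by
          rw [LinearEquiv.symm_apply_eq, he]
        simp [hEq]
      · intro hp
        simp only [LinearMap.coe_comp, Function.comp_apply] at hp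
        have hEq : ((e.symm p.1 : T) : V × V) = p := Prod.ext (hsymm p.1) hp.symm
        rw [← hEq]; exact (e.symm p.1).2
  · rintro ⟨L, hL, rfl⟩ p hp ⟨a, t, rfl⟩
    rw [LinearMap.mem_graph_iff] at hp
    by_cases hc : Real.cos t = 0
    · have hsa : Real.sin t • a = 0 := by
        simpa [hc] using hp
      simp [hc, hsa, Prod.ext_iff]
    · by_cases ha : a = 0
      · simp [ha, Prod.ext_iff]
      · exfalso
        apply hL (Real.sin t / Real.cos t) a ha
        have h1 : Real.cos t • L a = Real.sin t • a := by
          rw [← map_smul]; exact hp.symm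
        have h2 : L a = (Real.cos t)⁻¹ • (Real.sin t • a) := by
          rw [← h1, smul_smul, inv_mul_cancel₀ hc, one_smul]
        rw [h2, smul_smul, div_eq_inv_mul]
end
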